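/- Let (X, M, ∗) be a compact, complete fuzzy metric space and f : X → X a fuzzy continuous onto map. If f has the F-ergodic shadowing property, then f has the F-shadowing property. -/

import Mathlib

open Filter Topology

/-- A George–Veeramani fuzzy metric space: a continuous t-norm `star` together
with a fuzzy metric `M : X → X → (0,∞) → [0,1]`. -/
structure FuzzyMetricSpace (X : Type*) where
  star : ℝ → ℝ → ℝ
  M : X → X → ℝ → ℝ
  star_mem : ∀ a b : ℝ, a ∈ Set.Icc (0:ℝ) 1 → b ∈ Set.Icc (0:ℝ) 1 →
    star a b ∈ Set.Icc (0:ℝ) 1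
  star_assoc : ∀ a b c : ℝ, star (star a b) c = star a (star b c)
  star_comm : ∀ a b : ℝ, star a b = star b a
  star_cont : ContinuousOn (fun p : ℝ × ℝ => star p.1 p.2)
    (Set.Icc (0:ℝ) 1 ×ˢ Set.Icc (0:ℝ) 1)
  star_one : ∀ a ∈ Set.Icc (0:ℝ) 1, star a 1 = a
  star_mono : ∀ a b c d : ℝ, a ∈ Set.Icc (0:ℝ) 1 → b ∈ Set.Icc (0:ℝ) 1 →
    c ∈ Set.Icc (0:ℝ) 1 → d ∈ Set.Icc (0:ℝ) 1 → a ≤ c → b ≤ d →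
    star a b ≤ star c d
  M_pos : ∀ x y t, 0 < t → 0 < M x y t
  M_le_one : ∀ x y t, 0 < t → M x y t ≤ 1
  M_eq_one_iff : ∀ x y t, 0 < t → (M x y t = 1 ↔ x = y)
  M_symm : ∀ x y t, M x y t = M y x t
  M_triangle : ∀ x y z t s, 0 < t → 0 < s →
    star (M x y t) (M y z s) ≤ M x z (t + s)
  M_cont : ∀ x y, ContinuousOn (fun t => M x y t) (Set.Ioi (0:ℝ))

/-- A set `S ⊆ ℕ` has density zero. -/
def densityZero (S : Set ℕ) : Prop :=
  Tendsto (fun n : ℕ => (Nat.card (S ∩ Set.Ico 1 n : Set ℕ) : ℝ) / n)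
    atTop (nhds 0)

variable {X : Type*}

/-- `c 0, c 1, …, c n` is a `δ`-F-chain of `f` (of length `n`). -/
def IsFChain (F : FuzzyMetricSpace X) (f : X → X) (δ : ℝ) (n : ℕ) (c : ℕ → X) : Prop :=
  ∃ T₀ > (0:ℝ), ∀ i < n, F.M (f (c i)) (c (i + 1)) T₀ > 1 - δ

/-- `f` is F-chain transitive. -/
def FChainTransitive (F : FuzzyMetricSpace X) (f : X → X) : Prop :=
  ∀ x y : X, ∀ δ > (0:ℝ), ∃ n ≥ 1, ∃ c : ℕ → X,
    c 0 = x ∧ c n = y ∧ IsFChain F f δ n c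

/-- `f` is F-chain mixing. -/
def FChainMixing (F : FuzzyMetricSpace X) (f : X → X) : Prop :=
  ∀ x y : X, ∀ δ > (0:ℝ), ∃ N₀ : ℕ, ∀ n ≥ N₀, ∃ c : ℕ → X,
    c 0 = x ∧ c n = y ∧ IsFChain F f δ n c

/-- `f` has the F-ergodic shadowing property. -/
def FErgodicShadowing (F : FuzzyMetricSpace X) (f : X → X) : Prop :=
  ∀ ε > (0:ℝ), ∃ δ > (0:ℝ), ∀ (μ : ℕ → X) (T₀ : ℝ), 0 < T₀ →
    densityZero {i | F.M (f (μ i)) (μ (i + 1)) T₀ ≤ 1 - δ} →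
    ∃ x : X, densityZero {i | F.M (f^[i] x) (μ i) T₀ ≤ 1 - ε}

/-- `f` has the F-shadowing property (for infinite pseudo-orbits). -/
def FShadowing (F : FuzzyMetricSpace X) (f : X → X) : Prop :=
  ∀ ε > (0:ℝ), ∃ δ > (0:ℝ), ∀ μ : ℕ → X,
    (∃ T > (0:ℝ), ∀ i : ℕ, F.M (f (μ i)) (μ (i + 1)) T > 1 - δ) →
    ∃ x : X, ∃ T₀ > (0:ℝ), ∀ i : ℕ, F.M (f^[i] x) (μ i) T₀ > 1 - ε

/-- `f` has the F-shadowing property for finite chains. -/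
def FShadowingFin (F : FuzzyMetricSpace X) (f : X → X) : Prop :=
  ∀ ε > (0:ℝ), ∃ δ > (0:ℝ), ∀ (n : ℕ) (c : ℕ → X), IsFChain F f δ n c →
    ∃ x : X, ∃ T₀ > (0:ℝ), ∀ i ≤ n, F.M (f^[i] x) (c i) T₀ > 1 - ε

/-- The open ball in a fuzzy metric space. -/
def fuzzyBall (F : FuzzyMetricSpace X) (x : X) (r t : ℝ) : Set X :=
  {y | F.M x y t > 1 - r}

/-- The topology induced by a fuzzy metric. -/
def fuzzyTopology (F : FuzzyMetricSpace X) : TopologicalSpace X :=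
  TopologicalSpace.generateFrom
    {s | ∃ (x : X) (r t : ℝ), 0 < r ∧ r < 1 ∧ 0 < t ∧ s = fuzzyBall F x r t}

/-- `f` is fuzzy continuous. -/
def FuzzyContinuous (F : FuzzyMetricSpace X) (f : X → X) : Prop :=
  ∀ x₀ : X, ∀ ε ∈ Set.Ioo (0:ℝ) 1, ∀ t > (0:ℝ),
    ∃ δ ∈ Set.Ioo (0:ℝ) 1, ∃ t' > (0:ℝ), ∀ x : X,
      F.M x x₀ t' > 1 - δ → F.M (f x) (f x₀) t > 1 - ε

/-- The fuzzy metric space is complete: every Cauchy sequence converges. -/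
def FComplete (F : FuzzyMetricSpace X) : Prop :=
  ∀ u : ℕ → X,
    (∀ ε > (0:ℝ), ∀ t > (0:ℝ), ∃ N : ℕ, ∀ m ≥ N, ∀ n ≥ N, F.M (u m) (u n) t > 1 - ε) →
    ∃ x : X, ∀ t > (0:ℝ), Tendsto (fun n => F.M (u n) x t) atTop (nhds 1)

/-!
Ergodic shadowing of a surjective map yields chains between any two points at any scale: glue
forward orbit segments of `x` and backward orbit segments of `y` along dyadic blocks, so that the
jumps have density zero, and follow a shadowing orbit from an `x`-block into the next `y`-block.
A finite chain, closed up by such a chain back to its start and repeated periodically, is a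
pseudo-orbit without errors; since its exceptional set has density zero, an ergodic shadow of it
shadows a whole period somewhere. Compactness then turns shadowing of all finite initial segments
into shadowing of the whole pseudo-orbit, via continuity of the iterates at a limit point.
-/

namespace FuzzyMetricSpace

variable (F : FuzzyMetricSpace X)

lemma M_self (x : X) {t : ℝ} (ht : 0 < t) : F.M x x t = 1 :=
  (F.M_eq_one_iff x x t ht).2 rfl

lemma M_mem_Icc (x y : X) {t : ℝ} (ht : 0 < t) : F.M x y t ∈ Set.Icc (0 : ℝ) 1 :=
  ⟨(F.M_pos x y t ht).le, F.M_le_one x y t ht⟩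

/-- The fuzzy analogue of `ε / 2 + ε / 2 = ε`, from the continuity of the t-norm at `(1, 1)`. -/
lemma exists_lt_M_add_of_lt_of_lt {ε : ℝ} (hε : 0 < ε) :
    ∃ θ ∈ Set.Ioo (0 : ℝ) 1, ∀ (x y z : X) (t s : ℝ), 0 < t → 0 < s →
      1 - θ < F.M x y t → 1 - θ < F.M y z s → 1 - ε < F.M x z (t + s) := by
  have h11 : ((1 : ℝ), (1 : ℝ)) ∈ Set.Icc (0 : ℝ) 1 ×ˢ Set.Icc (0 : ℝ) 1 := by simp
  obtain ⟨r, hr, hstar⟩ := Metric.continuousWithinAt_iff.1 (F.star_cont _ h11) ε hε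
  refine ⟨min r (1 / 2), ⟨by positivity, by linarith [min_le_right r (1 / 2)]⟩,
    fun x y z t s ht hs hxy hyz => ?_⟩
  have hθr := min_le_left r (1 / 2)
  have hxy₁ := F.M_le_one x y t ht
  have hyz₁ := F.M_le_one y z s hs
  have hclose : dist (F.M x y t, F.M y z s) ((1 : ℝ), (1 : ℝ)) < r := by
    rw [Prod.dist_eq, Real.dist_eq, Real.dist_eq, abs_of_nonpos (by linarith),
      abs_of_nonpos (by linarith)]
    exact max_lt (by linarith) (by linarith)
  have h := hstar ⟨F.M_mem_Icc x y ht, F.M_mem_Icc y z hs⟩ hclose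
  rw [F.star_one 1 (by simp), Real.dist_eq] at h
  linarith [(abs_lt.1 h).1, F.M_triangle x y z t s ht hs]

lemma isOpen_fuzzyBall (x : X) {r t : ℝ} (hr : r ∈ Set.Ioo (0 : ℝ) 1) (ht : 0 < t) :
    IsOpen[fuzzyTopology F] (fuzzyBall F x r t) :=
  .basic _ ⟨x, r, t, hr.1, hr.2, ht, rfl⟩

end FuzzyMetricSpace

namespace FuzzyContinuous

variable {F : FuzzyMetricSpace X} {f : X → X}

lemma iterate (hf : FuzzyContinuous F f) : ∀ n, FuzzyContinuous F f^[n]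
  | 0 => fun _ ε hε t ht => ⟨ε, hε, t, ht, fun _ hx => hx⟩
  | n + 1 => fun x₀ ε hε t ht => by
    obtain ⟨δ₁, hδ₁, t₁, ht₁, h₁⟩ := hf (f^[n] x₀) ε hε t ht
    obtain ⟨δ₂, hδ₂, t₂, ht₂, h₂⟩ := iterate hf n x₀ δ₁ hδ₁ t₁ ht₁
    refine ⟨δ₂, hδ₂, t₂, ht₂, fun x hx => ?_⟩
    simpa only [Function.iterate_succ_apply'] using h₁ _ (h₂ x hx)

lemma exists_mem_lt_M_of_mem_closure (hf : FuzzyContinuous F f) {S : Set X} {x : X}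
    (hx : x ∈ closure[fuzzyTopology F] S) {θ s : ℝ} (hθ : θ ∈ Set.Ioo (0 : ℝ) 1) (hs : 0 < s) :
    ∃ y ∈ S, 1 - θ < F.M (f x) (f y) s := by
  obtain ⟨δ, hδ, t, ht, hcont⟩ := hf x θ hθ s hs
  have hball : x ∈ fuzzyBall F x δ t := by
    change 1 - δ < F.M x x t
    rw [F.M_self x ht]
    linarith [hδ.1]
  obtain ⟨y, hyx, hyS⟩ := (@mem_closure_iff X (fuzzyTopology F) x S).1 hx _
    (F.isOpen_fuzzyBall x hδ ht) hball
  refine ⟨y, hyS, ?_⟩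
  rw [F.M_symm]
  exact hcont y (by rw [F.M_symm]; exact hyx)

end FuzzyContinuous

lemma exists_forall_mem_closure_of_nonempty {X : Type*} [TopologicalSpace X] [CompactSpace X]
    (G : ℕ → Set X) (h : ∀ n, {x | ∀ i ≤ n, x ∈ G i}.Nonempty) :
    ∃ x, ∀ i, x ∈ closure (G i) := by
  obtain ⟨x, hx⟩ := IsCompact.nonempty_iInter_of_sequence_nonempty_isCompact_isClosed
    (fun n => closure {x | ∀ i ≤ n, x ∈ G i})
    (fun n => closure_mono fun x hx i hi => hx i (by omega)) (fun n => (h n).closure)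
    isClosed_closure.isCompact (fun _ => isClosed_closure)
  refine ⟨x, fun i => closure_mono ?_ (Set.mem_iInter.1 hx i)⟩
  exact fun _ hy => hy i le_rfl

lemma densityZero_empty : densityZero ∅ := by
  simp [densityZero]

lemma densityZero.mono {A B : Set ℕ} (hB : densityZero B) (hAB : A ⊆ B) : densityZero A := by
  refine squeeze_zero (fun n => by positivity) (fun n => ?_) hB
  gcongr
  exact Nat.card_mono ((Set.finite_Ico 1 n).inter_of_right B) (Set.inter_subset_inter_left _ hAB)

lemma densityZero_of_card_le {B : Set ℕ} (g : ℕ → ℝ)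
    (hcard : ∀ n, (Nat.card (B ∩ Set.Ico 1 n : Set ℕ) : ℝ) ≤ g n)
    (hg : Tendsto (fun n : ℕ => g n / n) atTop (𝓝 0)) : densityZero B :=
  squeeze_zero (fun n => by positivity) (fun n => by gcongr; exact hcard n) hg

lemma densityZero_setOf_add_one_eq_two_pow : densityZero {l | ∃ k, l + 1 = 2 ^ k} := by
  refine densityZero_of_card_le (fun n => Real.logb 2 n + 1) (fun n => ?_) ?_
  · have hsub : {l | ∃ k, l + 1 = 2 ^ k} ∩ Set.Ico 1 n ⊆
        ((Finset.range (Nat.log 2 n + 1)).image fun k => 2 ^ k - 1 : Finset ℕ) := by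
      rintro l ⟨⟨k, hk⟩, -, hln⟩
      simp only [Finset.coe_image, Finset.coe_range, Set.mem_image, Set.mem_Iio]
      exact ⟨k, Nat.lt_succ_of_le (Nat.le_log_of_pow_le one_lt_two (by omega)), by omega⟩
    calc (Nat.card (_ ∩ Set.Ico 1 n : Set ℕ) : ℝ)
        ≤ ((Finset.range (Nat.log 2 n + 1)).image fun k => 2 ^ k - 1).card := by
          rw [← Nat.card_eq_finsetCard]
          exact_mod_cast Nat.card_mono (Finset.finite_toSet _) hsub
      _ ≤ Nat.log 2 n + 1 := by exact_mod_cast Finset.card_image_le.trans (by simp)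
      _ ≤ Real.logb 2 n + 1 := by gcongr; exact Real.natLog_le_logb n 2
  · have hlog := (Real.tendsto_pow_logb_div_mul_add_atTop (b := 2) 1 0 1 one_ne_zero).comp
      tendsto_natCast_atTop_atTop
    simpa [add_div] using hlog.add tendsto_one_div_atTop_nhds_zero_nat

lemma densityZero.eventually_exists_mem_notMem {B : Set ℕ} (hB : densityZero B) {c : ℝ}
    (hc : 0 < c) :
    ∀ᶠ n : ℕ in atTop, ∀ S ⊆ Set.Ico 1 n, c * n ≤ S.ncard → ∃ i ∈ S, i ∉ B := by
  filter_upwards [hB.eventually (gt_mem_nhds hc), eventually_gt_atTop 0] with n hn hn₀ S hS hcS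
  by_contra! hSB
  have hcard : S.ncard ≤ Nat.card (B ∩ Set.Ico 1 n : Set ℕ) := by
    rw [Nat.card_coe_set_eq]
    exact Set.ncard_le_ncard (fun i hi => ⟨hSB i hi, hS hi⟩)
      ((Set.finite_Ico 1 n).inter_of_right B)
  rw [div_lt_iff₀ (by exact_mod_cast hn₀)] at hn
  have : (S.ncard : ℝ) ≤ Nat.card (B ∩ Set.Ico 1 n : Set ℕ) := by exact_mod_cast hcard
  linarith

lemma densityZero.exists_forall_add_notMem {B : Set ℕ} (hB : densityZero B) {n p : ℕ}
    (hnp : n < p) : ∃ k, ∀ r ≤ n, k * p + r ∉ B := by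
  by_contra! hblock
  choose r hrn hrB using hblock
  have hp : (0 : ℝ) < p := by exact_mod_cast (Nat.zero_le n).trans_lt hnp
  have hφ : StrictMono fun k => k * p + r k :=
    strictMono_nat_of_lt_succ fun k => by have := hrn k; nlinarith
  obtain ⟨N, hN⟩ :=
    (hB.eventually_exists_mem_notMem (c := 1 / (2 * p)) (by positivity)).exists_forall_of_atTop
  have hsub : (fun k => k * p + r k) '' Set.Ico 1 (N + 2) ⊆ Set.Ico 1 ((N + 2) * p) := by
    rintro _ ⟨k, ⟨hk₁, hk₂⟩, rfl⟩
    have := hrn k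
    constructor <;> nlinarith
  have hcard : 1 / (2 * p) * (((N + 2) * p : ℕ) : ℝ) ≤
      ((fun k => k * p + r k) '' Set.Ico 1 (N + 2)).ncard := by
    rw [hφ.injective.injOn.ncard_image, Set.ncard_Ico_nat]
    field_simp
    push_cast
    nlinarith
  obtain ⟨_, ⟨k, -, rfl⟩, hk⟩ := hN _ (by nlinarith) _ hsub hcard
  exact hk (hrB k)

lemma densityZero.exists_notMem_dyadic {B : Set ℕ} (hB : densityZero B) :
    ∃ k, Even k ∧ (∃ i ∈ Set.Ioo (2 ^ k) (2 ^ (k + 1)), i ∉ B) ∧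
      ∃ j ∈ Set.Ico (2 ^ (k + 1)) (2 ^ (k + 2)), j ∉ B := by
  obtain ⟨N, hN⟩ :=
    (hB.eventually_exists_mem_notMem (c := 1 / 8) (by norm_num)).exists_forall_of_atTop
  set k := 2 * N + 2
  have hk₄ : 4 ≤ 2 ^ k := Nat.pow_le_pow_right two_pos (show 2 ≤ k by omega)
  have hk₁ : 2 ^ (k + 1) = 2 * 2 ^ k := by rw [pow_succ, mul_comm]
  have hk₂ : 2 ^ (k + 2) = 4 * 2 ^ k := by rw [pow_add, mul_comm]; norm_num
  have hNk : N ≤ 2 ^ (k + 2) :=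
    Nat.lt_two_pow_self.le.trans (Nat.pow_le_pow_right two_pos (by omega))
  have hcard (S : Set ℕ) (hS : 2 ^ (k + 2) ≤ 8 * S.ncard) :
      1 / 8 * ((2 ^ (k + 2) : ℕ) : ℝ) ≤ S.ncard := by
    have : ((2 ^ (k + 2) : ℕ) : ℝ) ≤ 8 * S.ncard := by exact_mod_cast hS
    linarith
  refine ⟨k, ⟨N + 1, by omega⟩, hN _ hNk _ (fun l hl => ⟨by have := hl.1; omega, ?_⟩)
    (hcard _ (by rw [Set.ncard_Ioo_nat]; omega)), hN _ hNk _
    (fun l hl => ⟨by have := hl.1; omega, hl.2⟩) (hcard _ (by rw [Set.ncard_Ico_nat]; omega))⟩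
  have := hl.2
  omega

def IsFChainAt (F : FuzzyMetricSpace X) (f : X → X) (δ t : ℝ) (n : ℕ) (c : ℕ → X) : Prop :=
  ∀ i < n, 1 - δ < F.M (f (c i)) (c (i + 1)) t

namespace IsFChainAt

variable {F : FuzzyMetricSpace X} {f : X → X} {δ t : ℝ}

lemma append {n m : ℕ} {c d : ℕ → X} (hc : IsFChainAt F f δ t n c)
    (hd : IsFChainAt F f δ t m d) (hcd : c n = d 0) :
    IsFChainAt F f δ t (n + m) (fun i => if i ≤ n then c i else d (i - n)) := by
  have hright : ∀ i ≥ n, (if i ≤ n then c i else d (i - n)) = d (i - n) := by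
    intro i hi
    split_ifs with h
    · rw [show i = n by omega, hcd, Nat.sub_self]
    · rfl
  intro i hi
  rcases lt_or_ge i n with hin | hni
  · simp only [if_pos hin.le, if_pos (show i + 1 ≤ n by omega)]
    exact hc i hin
  · dsimp only
    rw [hright i hni, hright (i + 1) (by omega), show i + 1 - n = i - n + 1 by omega]
    exact hd (i - n) (by omega)

lemma periodic {p : ℕ} {c : ℕ → X} (hc : IsFChainAt F f δ t p c) (hp : 0 < p)
    (hcp : c p = c 0) (j : ℕ) : 1 - δ < F.M (f (c (j % p))) (c ((j + 1) % p)) t := by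
  have hstep := hc (j % p) (Nat.mod_lt j hp)
  rw [← Nat.mod_add_mod]
  by_cases hwrap : j % p + 1 = p
  · rw [hwrap, hcp] at hstep
    rwa [hwrap, Nat.mod_self]
  · rwa [Nat.mod_eq_of_lt (a := j % p + 1) (by have := Nat.mod_lt j hp; omega)]

end IsFChainAt

/-- The chain is `ξ` with the window `[i, j)` replaced by the orbit of `z`. -/
lemma exists_isFChainAt_of_shadow {F : FuzzyMetricSpace X} {f : X → X} {δ t : ℝ} (ξ : ℕ → X)
    (z : X) {a i j b : ℕ} (hδ : 0 < δ) (ht : 0 < t)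
    (hai : a < i) (hij : i < j) (hjb : j ≤ b)
    (hx : ∀ l, a ≤ l → l < i → f (ξ l) = ξ (l + 1))
    (hy : ∀ l, j ≤ l → l < b → f (ξ l) = ξ (l + 1))
    (hzi : 1 - δ < F.M (f^[i] z) (ξ i) t) (hzj : 1 - δ < F.M (f^[j] z) (ξ j) t) :
    ∃ c, c 0 = ξ a ∧ c (b - a) = ξ b ∧ IsFChainAt F f δ t (b - a) c := by
  refine ⟨fun l => if i ≤ a + l ∧ a + l < j then f^[a + l] z else ξ (a + l),
    by simp [show ¬ i ≤ a by omega], by simp [show a + (b - a) = b by omega, show ¬ b < j by omega],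
    fun l hl => ?_⟩
  have hexact : 1 - δ < 1 := by linarith
  have horbit : f (f^[a + l] z) = f^[a + (l + 1)] z := by
    rw [← Function.iterate_succ_apply' f, ← add_assoc]
  dsimp only
  split_ifs with hl₀ hl₁ hl₁
  · rwa [horbit, F.M_self _ ht]
  · rwa [horbit, show a + (l + 1) = j by omega]
  · rwa [show a + (l + 1) = i by omega, hx (a + l) (by omega) (by omega),
      show a + l + 1 = i by omega, F.M_symm]
  · rcases lt_or_ge (a + l) i with hli | hlj
    · rwa [← add_assoc, hx (a + l) (by omega) hli, F.M_self _ ht]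
    · rwa [← add_assoc, hy (a + l) (by omega) (by omega), F.M_self _ ht]

def dyadicPseudoOrbit (f g : X → X) (x y : X) (l : ℕ) : X :=
  if Even (Nat.log 2 l) then f^[l - 2 ^ Nat.log 2 l] x else g^[2 ^ (Nat.log 2 l + 1) - 1 - l] y

section dyadicPseudoOrbit

variable {f g : X → X} {x y : X} {k l : ℕ}

lemma dyadicPseudoOrbit_of_even (hk : Even k) (hkl : 2 ^ k ≤ l) (hlk : l < 2 ^ (k + 1)) :
    dyadicPseudoOrbit f g x y l = f^[l - 2 ^ k] x := by
  rw [dyadicPseudoOrbit, Nat.log_eq_of_pow_le_of_lt_pow hkl hlk, if_pos hk]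

lemma dyadicPseudoOrbit_of_not_even (hk : ¬ Even k) (hkl : 2 ^ k ≤ l) (hlk : l < 2 ^ (k + 1)) :
    dyadicPseudoOrbit f g x y l = g^[2 ^ (k + 1) - 1 - l] y := by
  rw [dyadicPseudoOrbit, Nat.log_eq_of_pow_le_of_lt_pow hkl hlk, if_neg hk]

lemma apply_dyadicPseudoOrbit (hg : Function.RightInverse g f) (hkl : 2 ^ k ≤ l)
    (hlk : l + 1 < 2 ^ (k + 1)) :
    f (dyadicPseudoOrbit f g x y l) = dyadicPseudoOrbit f g x y (l + 1) := by
  by_cases hk : Even k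
  · rw [dyadicPseudoOrbit_of_even hk hkl (by omega), dyadicPseudoOrbit_of_even hk (by omega) hlk,
      ← Function.iterate_succ_apply' f, Nat.succ_eq_add_one, Nat.sub_add_comm hkl]
  · rw [dyadicPseudoOrbit_of_not_even hk hkl (by omega),
      dyadicPseudoOrbit_of_not_even hk (by omega) hlk,
      show 2 ^ (k + 1) - 1 - l = (2 ^ (k + 1) - 1 - (l + 1)) + 1 by omega,
      Function.iterate_succ_apply', hg]

lemma setOf_apply_dyadicPseudoOrbit_ne_subset (hg : Function.RightInverse g f) :
    {l | f (dyadicPseudoOrbit f g x y l) ≠ dyadicPseudoOrbit f g x y (l + 1)} ⊆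
      {l | ∃ k, l + 1 = 2 ^ k} := by
  intro l hl
  by_contra hpow
  simp only [Set.mem_ofPred_eq, not_exists] at hpow
  have hl₀ : l ≠ 0 := fun h => hpow 0 (by simp [h])
  exact hl (apply_dyadicPseudoOrbit hg (Nat.pow_log_le_self 2 hl₀)
    (lt_of_le_of_ne (Nat.lt_pow_succ_log_self one_lt_two l) (hpow _)))

end dyadicPseudoOrbit

namespace FErgodicShadowing

variable {F : FuzzyMetricSpace X} {f : X → X}

lemma exists_isFChainAt (h : FErgodicShadowing F f) (hsurj : Function.Surjective f)
    {δ t : ℝ} (hδ : 0 < δ) (ht : 0 < t) (x y : X) :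
    ∃ n > 0, ∃ c, c 0 = x ∧ c n = y ∧ IsFChainAt F f δ t n c := by
  obtain ⟨g, hg⟩ := hsurj.hasRightInverse
  obtain ⟨δ', hδ', hshadow⟩ := h δ hδ
  set ξ := dyadicPseudoOrbit f g x y with hξ
  have hbad : {l | F.M (f (ξ l)) (ξ (l + 1)) t ≤ 1 - δ'} ⊆ {l | f (ξ l) ≠ ξ (l + 1)} :=
    fun l hl heq => by
      rw [Set.mem_ofPred_eq, heq, F.M_self _ ht] at hl
      linarith
  obtain ⟨z, hz⟩ := hshadow ξ t ht
    ((densityZero_setOf_add_one_eq_two_pow.mono (setOf_apply_dyadicPseudoOrbit_ne_subset hg)).mono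
      hbad)
  obtain ⟨k, hk, ⟨i, hi, hzi⟩, j, hj, hzj⟩ := hz.exists_notMem_dyadic
  rw [Set.mem_ofPred_eq, not_le] at hzi hzj
  have hk₀ : 1 ≤ 2 ^ k := Nat.one_le_two_pow
  have hk₁ : 2 ^ (k + 1) = 2 * 2 ^ k := by rw [pow_succ, mul_comm]
  have hk₂ : 2 ^ (k + 2) = 4 * 2 ^ k := by rw [pow_add, mul_comm]; norm_num
  obtain ⟨c, hc₀, hcn, hc⟩ := exists_isFChainAt_of_shadow ξ z (a := 2 ^ k) (b := 2 ^ (k + 2) - 1)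
    hδ ht hi.1 (hi.2.trans_le hj.1) (by have := hj.2; omega)
    (fun l hl₁ hl₂ => apply_dyadicPseudoOrbit hg hl₁ (by have := hi.2; omega))
    (fun l hl₁ hl₂ => apply_dyadicPseudoOrbit (k := k + 1) hg (hj.1.trans hl₁) (by omega)) hzi hzj
  refine ⟨2 ^ (k + 2) - 1 - 2 ^ k, by omega, c, ?_, ?_, hc⟩
  · rw [hc₀, hξ, dyadicPseudoOrbit_of_even hk le_rfl (by omega), Nat.sub_self,
      Function.iterate_zero_apply]
  · rw [hcn, hξ, dyadicPseudoOrbit_of_not_even (k := k + 1) (l := 2 ^ (k + 2) - 1)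
      (by simpa [Nat.even_add_one]) (by omega) (by omega),
      show 2 ^ (k + 1 + 1) - 1 - (2 ^ (k + 2) - 1) = 0 by omega, Function.iterate_zero_apply]

lemma exists_shadow_of_isFChainAt (h : FErgodicShadowing F f) (hsurj : Function.Surjective f)
    {ε : ℝ} (hε : 0 < ε) :
    ∃ δ > 0, ∀ t > 0, ∀ n c, IsFChainAt F f δ t n c →
      ∃ x, ∀ i ≤ n, 1 - ε < F.M (f^[i] x) (c i) t := by
  obtain ⟨δ, hδ, hshadow⟩ := h ε hε
  refine ⟨δ, hδ, fun t ht n c hc => ?_⟩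
  obtain ⟨m, hm, d, hd₀, hdm, hd⟩ := h.exists_isFChainAt hsurj hδ ht (c n) (c 0)
  set e := fun i => if i ≤ n then c i else d (i - n)
  have he : IsFChainAt F f δ t (n + m) e := hc.append hd hd₀.symm
  have hclosed : e (n + m) = e 0 := by simp [e, hm.ne', hdm]
  obtain ⟨z, hz⟩ := hshadow (fun j => e (j % (n + m))) t ht
    (densityZero_empty.mono fun j hj => not_le.2 (he.periodic (by omega) hclosed j) hj)
  obtain ⟨k, hk⟩ := hz.exists_forall_add_notMem (show n < n + m by omega)
  refine ⟨f^[k * (n + m)] z, fun i hi => ?_⟩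
  have hgood := hk i hi
  rw [Set.mem_ofPred_eq, not_le, show k * (n + m) + i = i + k * (n + m) from add_comm _ _,
    Function.iterate_add_apply, Nat.add_mul_mod_self_right, Nat.mod_eq_of_lt (by omega)] at hgood
  simpa [e, hi] using hgood

end FErgodicShadowing

theorem ergodicShadowing_implies_shadowing_general {X : Type*} (F : FuzzyMetricSpace X)
    (hcompact : @CompactSpace X (fuzzyTopology F))
    (f : X → X) (hcont : FuzzyContinuous F f) (hsurj : Function.Surjective f)
    (h : FErgodicShadowing F f) : FShadowing F f := by
  let _ : TopologicalSpace X := fuzzyTopology F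
  intro ε hε
  obtain ⟨θ, hθ, htriangle⟩ := F.exists_lt_M_add_of_lt_of_lt hε
  obtain ⟨δ, hδ, hfinite⟩ := h.exists_shadow_of_isFChainAt hsurj hθ.1
  refine ⟨δ, hδ, fun μ ⟨T, hT, hμ⟩ => ?_⟩
  obtain ⟨x, hx⟩ := exists_forall_mem_closure_of_nonempty
    (fun i => {y | 1 - θ < F.M (f^[i] y) (μ i) T}) fun n => hfinite T hT n μ fun i _ => hμ i
  refine ⟨x, 1 + T, by linarith, fun i => ?_⟩
  obtain ⟨y, hy, hxy⟩ := (hcont.iterate i).exists_mem_lt_M_of_mem_closure (hx i) hθ one_pos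
  exact htriangle _ _ _ _ _ one_pos hT hxy hy

/-- On a compact complete fuzzy metric space, for a fuzzy continuous onto map,
F-ergodic shadowing implies F-shadowing. -/
theorem ergodicShadowing_implies_shadowing {X : Type*} (F : FuzzyMetricSpace X)
    (hcompact : @CompactSpace X (fuzzyTopology F))
    (hcomplete : FComplete F)
    (f : X → X) (hcont : FuzzyContinuous F f) (hsurj : Function.Surjective f)
    (h : FErgodicShadowing F f) : FShadowing F f :=
  ergodicShadowing_implies_shadowing_general F hcompact f hcont hsurj h
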